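/- Let X and Y be independent distributions on G^t and let Z be the interleaved product X_1 Y_1 ... X_t Y_t. Then for every irreducible representation ρ of G, tr(Ẑ(ρ)) = |G|^{2t-1} Σ_{i_1,...,i_{2t}} X̂(ρ̄^{⊗t})_{i_1,...,i_{2t}} · Ŷ'(ρ̄^{⊗t})_{i_1,...,i_{2t}}, i.e., the trace of the Fourier coefficient of Z equals |G|^{2t-1} times the entrywise inner product of the tensor-power Fourier coefficients of X and a cyclically shifted version of Y. -/

import Mathlib

/-!
With `σ = ρ̄`, expanding `Z` as the pushforward of `X ⊗ Y` under `(x, y) ↦ x₁y₁⋯xₜyₜ` gives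
`tr Ẑ(ρ) = |G|⁻¹ ∑_{x,y} X(x) Y(y) tr σ(x₁y₁⋯xₜyₜ)`. The trace of a product of matrices is a sum
over closed index walks `a₁ → b₁ → a₂ → ⋯ → bₜ → a₁`, so
`tr σ(x₁y₁⋯xₜyₜ) = ∑_{a,b} ∏ₖ σ(xₖ)_{aₖbₖ} σ(yₖ)_{bₖaₖ₊₁}`. Exchanging the sums over `(x, y)` and
`(a, b)` factors the result into the two tensor-power Fourier coefficients, and the normalisations
combine as `|G|^{2t-1} |G|^{-2t} = |G|⁻¹`.
-/

open Finset

namespace Matrix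

variable {n R : Type*} [Fintype n] [DecidableEq n] [CommSemiring R]

theorem list_ofFn_prod_apply : ∀ {t : ℕ} (M : Fin (t + 1) → Matrix n n R) (i j : n),
    (List.ofFn M).prod i j =
      ∑ a : Fin t → n,
        ∏ k, M k ((Fin.cons i a : Fin (t + 1) → n) k) ((Fin.snoc a j : Fin (t + 1) → n) k)
  | 0, M, i, j => by simp [Fin.snoc]
  | t + 1, M, i, j => by
    rw [List.ofFn_succ, List.prod_cons, mul_apply,
      ← (Fin.consEquiv fun _ => n).sum_comp, Fintype.sum_prod_type]
    refine sum_congr rfl fun b _ => ?_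
    rw [list_ofFn_prod_apply, mul_sum]
    refine sum_congr rfl fun a _ => ?_
    simp [Fin.prod_univ_succ, Fin.consEquiv, ← Fin.cons_snoc_eq_snoc_cons]

theorem trace_list_ofFn_prod {t : ℕ} [NeZero t] (M : Fin t → Matrix n n R) :
    trace (List.ofFn M).prod = ∑ a : Fin t → n, ∏ k, M k (a k) (a (finRotate t k)) := by
  obtain ⟨s, rfl⟩ := Nat.exists_eq_succ_of_ne_zero (NeZero.ne t)
  simp only [trace, diag_apply, list_ofFn_prod_apply, Fin.snoc_eq_cons_rotate]
  rw [← (Fin.consEquiv fun _ => n).sum_comp, Fintype.sum_prod_type]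
  rfl

theorem trace_list_ofFn_mul_prod {t : ℕ} [NeZero t] (A B : Fin t → Matrix n n R) :
    trace (List.ofFn fun k => A k * B k).prod =
      ∑ a : Fin t → n, ∑ b : Fin t → n,
        (∏ k, A k (a k) (b k)) * ∏ k, B k (b k) (a (finRotate t k)) := by
  simp only [trace_list_ofFn_prod, mul_apply, Fintype.prod_sum, prod_mul_distrib]

end Matrix

theorem finRotate_eq_mk_mod {t : ℕ} (ht : 0 < t) (k : Fin t) :
    finRotate t k = ⟨(k.val + 1) % t, Nat.mod_lt _ ht⟩ := by
  have : NeZero t := ⟨ht.ne'⟩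
  ext
  simp [Fin.val_add, Nat.add_mod]

theorem sum_pushforward_mul {α β G R : Type*} [Fintype α] [Fintype β] [Fintype G]
    [DecidableEq G] [NonUnitalNonAssocSemiring R] (f : α → β → G) (w : α → β → R) (φ : G → R) :
    ∑ g, (∑ x, ∑ y, if f x y = g then w x y else 0) * φ g = ∑ x, ∑ y, w x y * φ (f x y) := by
  simp only [sum_mul, ite_mul, zero_mul]
  rw [sum_comm]
  refine sum_congr rfl fun x _ => ?_
  rw [sum_comm]
  simp

theorem sum_sum_sum_sum_comm {α β γ δ M : Type*} [Fintype α] [Fintype β] [Fintype γ]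
    [Fintype δ] [AddCommMonoid M] (f : α → β → γ → δ → M) :
    ∑ a, ∑ b, ∑ c, ∑ d, f a b c d = ∑ c, ∑ d, ∑ a, ∑ b, f a b c d := by
  simpa only [Fintype.sum_prod_type] using
    sum_comm (s := univ) (t := univ) (f := fun (p : α × β) (q : γ × δ) => f p.1 p.2 q.1 q.2)

theorem sum_sum_mul_sum_sum_comm {α β γ δ R : Type*} [Fintype α] [Fintype β] [Fintype γ]
    [Fintype δ] [CommSemiring R] (u : α → R) (v : β → R) (P : α → γ → δ → R)
    (Q : β → γ → δ → R) :
    ∑ x, ∑ y, u x * v y * ∑ a, ∑ b, P x a b * Q y a b =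
      ∑ a, ∑ b, (∑ x, u x * P x a b) * ∑ y, v y * Q y a b := by
  simp_rw [sum_mul_sum, mul_sum]
  rw [sum_sum_sum_sum_comm]
  simp only [mul_mul_mul_comm]

theorem trace_fourier_interleaved_general {G : Type*} [Group G] [Fintype G] [DecidableEq G]
    (t : ℕ) (ht : 0 < t)
    (X Y : (Fin t → G) → ℝ)
    (Z : G → ℝ)
    (hZ : ∀ g : G, Z g = ∑ x : Fin t → G, ∑ y : Fin t → G,
        if (List.ofFn fun k => x k * y k).prod = g then X x * Y y else 0)
    (m : ℕ) (ρ : G →* Matrix (Fin m) (Fin m) ℂ) :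
    Matrix.trace ((Fintype.card G : ℂ)⁻¹ •
        ∑ g : G, (Z g : ℂ) • (ρ g).map (starRingEnd ℂ)) =
    (Fintype.card G : ℂ) ^ (2 * t - 1) *
      ∑ a : Fin t → Fin m, ∑ b : Fin t → Fin m,
        (((Fintype.card G : ℂ) ^ t)⁻¹ * ∑ x : Fin t → G, (X x : ℂ) *
            ∏ k : Fin t, ((ρ (x k)).map (starRingEnd ℂ)) (a k) (b k)) *
        (((Fintype.card G : ℂ) ^ t)⁻¹ * ∑ y : Fin t → G, (Y y : ℂ) *
            ∏ k : Fin t, ((ρ (y k)).map (starRingEnd ℂ)) (b k)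
              (a ⟨(k.val + 1) % t, Nat.mod_lt _ ht⟩)) := by
  have : NeZero t := ⟨ht.ne'⟩
  set c : ℂ := (Fintype.card G : ℂ)
  set σ : G →* Matrix (Fin m) (Fin m) ℂ := (RingHom.mapMatrix (starRingEnd ℂ)).toMonoidHom.comp ρ
  have hc : c ≠ 0 := Nat.cast_ne_zero.mpr Fintype.card_ne_zero
  have hscale : c ^ (2 * t - 1) * ((c ^ t)⁻¹ * (c ^ t)⁻¹) = c⁻¹ := by
    obtain ⟨s, rfl⟩ := Nat.exists_eq_add_one_of_ne_zero ht.ne'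
    rw [show 2 * (s + 1) - 1 = s + s + 1 by omega]
    field_simp
    ring
  calc Matrix.trace (c⁻¹ • ∑ g : G, (Z g : ℂ) • σ g)
      = c⁻¹ * ∑ x : Fin t → G, ∑ y : Fin t → G,
          (X x : ℂ) * Y y * Matrix.trace (σ (List.ofFn fun k => x k * y k).prod) := by
        simp only [Matrix.trace_smul, Matrix.trace_sum, smul_eq_mul, hZ]
        push_cast [apply_ite (Complex.ofReal)]
        rw [sum_pushforward_mul]
    _ = c⁻¹ * ∑ a : Fin t → Fin m, ∑ b : Fin t → Fin m,
          (∑ x : Fin t → G, (X x : ℂ) * ∏ k, σ (x k) (a k) (b k)) *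
          ∑ y : Fin t → G, (Y y : ℂ) * ∏ k, σ (y k) (b k) (a (finRotate t k)) := by
        simp only [map_list_prod, List.map_ofFn, Function.comp_def, map_mul,
          Matrix.trace_list_ofFn_mul_prod, sum_sum_mul_sum_sum_comm]
    _ = _ := by
        simp only [finRotate_eq_mk_mod ht, ← hscale, mul_mul_mul_comm _ _ (c ^ t)⁻¹, ← mul_sum,
          mul_assoc]
        rfl

/-- The "critical equation": the trace of the Fourier coefficient of the interleaved
product `Z = X₁Y₁⋯XₜYₜ` at a representation `ρ` equals `|G|^{2t-1}` times the entrywise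
inner product of the tensor-power Fourier coefficient of `X` (at index pairs
`(a k, b k)`) and the cyclically shifted one of `Y` (at index pairs `(b k, a (k+1))`). -/
theorem trace_fourier_interleaved {G : Type*} [Group G] [Fintype G] [DecidableEq G]
    (t : ℕ) (ht : 0 < t)
    (X Y : (Fin t → G) → ℝ)
    (hX0 : ∀ x, 0 ≤ X x) (hX1 : ∑ x : Fin t → G, X x = 1)
    (hY0 : ∀ y, 0 ≤ Y y) (hY1 : ∑ y : Fin t → G, Y y = 1)
    (Z : G → ℝ)
    (hZ : ∀ g : G, Z g = ∑ x : Fin t → G, ∑ y : Fin t → G,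
        if (List.ofFn fun k => x k * y k).prod = g then X x * Y y else 0)
    (m : ℕ) (ρ : G →* Matrix (Fin m) (Fin m) ℂ) :
    Matrix.trace ((Fintype.card G : ℂ)⁻¹ •
        ∑ g : G, (Z g : ℂ) • (ρ g).map (starRingEnd ℂ)) =
    (Fintype.card G : ℂ) ^ (2 * t - 1) *
      ∑ a : Fin t → Fin m, ∑ b : Fin t → Fin m,
        (((Fintype.card G : ℂ) ^ t)⁻¹ * ∑ x : Fin t → G, (X x : ℂ) *
            ∏ k : Fin t, ((ρ (x k)).map (starRingEnd ℂ)) (a k) (b k)) *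
        (((Fintype.card G : ℂ) ^ t)⁻¹ * ∑ y : Fin t → G, (Y y : ℂ) *
            ∏ k : Fin t, ((ρ (y k)).map (starRingEnd ℂ)) (b k)
              (a ⟨(k.val + 1) % t, Nat.mod_lt _ ht⟩)) :=
  trace_fourier_interleaved_general t ht X Y Z hZ m ρ
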